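/- arXiv:1707.01963 — 6 statements merged into one kernel-verified Lean document; each statement's English description precedes it below -/
import Mathlib

section
/- For every odd prime power q, the integer q^4 - q^2 + 1 is coprime to q*(q^6 - 1)*(q^8 - 1). -/
lemma zmod2_aux : ∀ y : ZMod 2, y ^ 2 ≠ y ^ 4 + 1 := by decide

lemma zmod3_aux : ∀ y : ZMod 3, y ^ 2 ≠ y ^ 4 + 1 := by decide

/-- For an odd prime power `q`, `q^4 - q^2 + 1` is coprime to `q (q^6-1)(q^8-1)`. -/
theorem F4_components_coprime (p n q : ℕ) (hp : p.Prime) (hodd : Odd p)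
    (hn : 0 < n) (hq : q = p ^ n) :
    Nat.Coprime (q ^ 4 - q ^ 2 + 1) (q * (q ^ 6 - 1) * (q ^ 8 - 1)) := by
  have hq1 : 1 ≤ q := hq ▸ Nat.one_le_pow _ _ hp.pos
  by_contra h
  obtain ⟨r, hr, hra, hrb⟩ := Nat.Prime.not_coprime_iff_dvd.mp h
  haveI : Fact r.Prime := ⟨hr⟩
  have hq24 : q ^ 2 ≤ q ^ 4 := Nat.pow_le_pow_right hq1 (by norm_num)
  have hkey : q ^ 4 - q ^ 2 + 1 + q ^ 2 = q ^ 4 + 1 := by omega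
  have ha0 : ((q ^ 4 - q ^ 2 + 1 : ℕ) : ZMod r) = 0 :=
    (ZMod.natCast_eq_zero_iff _ _).mpr hra
  have h1 : ((q ^ 4 - q ^ 2 + 1 : ℕ) : ZMod r) + (q : ZMod r) ^ 2
      = (q : ZMod r) ^ 4 + 1 := by exact_mod_cast congrArg (Nat.cast : ℕ → ZMod r) hkey
  rw [ha0, zero_add] at h1
  -- h1 : (q:ZMod r)^2 = (q:ZMod r)^4 + 1
  have h6' : (q : ZMod r) ^ 6 = -1 := by linear_combination (-(q : ZMod r) ^ 2 - 1) * h1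
  rcases hr.dvd_mul.mp hrb with h' | h8
  · rcases hr.dvd_mul.mp h' with hq' | h6
    · -- r ∣ q
      have hx0 : (q : ZMod r) = 0 := (ZMod.natCast_eq_zero_iff _ _).mpr hq'
      rw [hx0] at h1
      simp at h1
    · -- r ∣ q^6 - 1
      have hk6 : q ^ 6 - 1 + 1 = q ^ 6 := by
        have : 1 ≤ q ^ 6 := Nat.one_le_pow _ _ hq1
        omega
      have hc6 : ((q ^ 6 - 1 : ℕ) : ZMod r) = 0 :=
        (ZMod.natCast_eq_zero_iff _ _).mpr h6
      have hx6 : (q : ZMod r) ^ 6 = 1 := by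
        have := congrArg (Nat.cast : ℕ → ZMod r) hk6
        push_cast at this
        rw [hc6, zero_add] at this
        exact this.symm
      have h2 : (2 : ZMod r) = 0 := by linear_combination h6' - hx6
      have hr2 : r = 2 := by
        have : r ∣ 2 := by
          have := (ZMod.natCast_eq_zero_iff 2 r).mp (by exact_mod_cast h2)
          exact this
        exact (Nat.prime_dvd_prime_iff_eq hr Nat.prime_two).mp this
      subst hr2
      exact zmod2_aux _ h1
  · -- r ∣ q^8 - 1
    have hk8 : q ^ 8 - 1 + 1 = q ^ 8 := by
      have : 1 ≤ q ^ 8 := Nat.one_le_pow _ _ hq1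
      omega
    have hc8 : ((q ^ 8 - 1 : ℕ) : ZMod r) = 0 :=
      (ZMod.natCast_eq_zero_iff _ _).mpr h8
    have hx8 : (q : ZMod r) ^ 8 = 1 := by
      have := congrArg (Nat.cast : ℕ → ZMod r) hk8
      push_cast at this
      rw [hc8, zero_add] at this
      exact this.symm
    have hx2 : (q : ZMod r) ^ 2 = -1 := by
      linear_combination (q : ZMod r) ^ 2 * h6' - hx8
    have h3 : (3 : ZMod r) = 0 := by
      linear_combination (-1 : ZMod r) * h1 + (2 - (q : ZMod r) ^ 2) * hx2
    have hr3 : r = 3 := by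
      have : r ∣ 3 := by
        have := (ZMod.natCast_eq_zero_iff 3 r).mp (by exact_mod_cast h3)
        exact this
      exact (Nat.prime_dvd_prime_iff_eq hr Nat.prime_three).mp this
    subst hr3
    exact zmod3_aux _ h1
end

section
/- For every prime power q ≥ 2, the integer (q^6 + q^3 + 1)/gcd(3, q-1) is coprime to q*(q^5 - 1)*(q^8 - 1)*(q^12 - 1). -/
/-!
Write `Φ₉(q) = q^6 + q^3 + 1` (`cyclotomicNine q`), so that `Φ₉(q) ∣ q^9 - 1`. Since
`gcd(q^9 - 1, q^k - 1) = q^gcd(9,k) - 1`, a common divisor of `Φ₉(q)` and `q^k - 1` with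
`k ∈ {5, 8, 12}` divides `q^3 - 1`, and `Φ₉(q) = (q^3 - 1)(q^3 + 2) + 3` makes it divide `3`;
`Φ₉(q)` is also prime to `q`. So only `3` can divide both sides. But `9 ∤ Φ₉(q)`, and
`3 ∣ Φ₉(q)` exactly when `3 ∣ q - 1`, so dividing by `gcd(3, q - 1)` removes the factor `3`.
-/

theorem Nat.Prime.not_dvd_div_gcd {p n : ℕ} (hp : p.Prime) (hn : ¬ p ^ 2 ∣ n) :
    ¬ p ∣ n / Nat.gcd p n := by
  by_cases hpn : p ∣ n
  · rw [Nat.gcd_eq_left hpn]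
    exact fun h => hn (sq p ▸ Nat.mul_dvd_of_dvd_div hpn h)
  · rwa [(hp.coprime_iff_not_dvd.mpr hpn).gcd_eq_one, Nat.div_one]

def cyclotomicNine (q : ℕ) : ℕ := q ^ 6 + q ^ 3 + 1

namespace cyclotomicNine

theorem dvd_pow_nine_sub_one (q : ℕ) : cyclotomicNine q ∣ q ^ 9 - 1 := by
  rcases Nat.eq_zero_or_pos q with rfl | hq
  · simp
  refine Dvd.intro_left (q ^ 3 - 1) ?_
  have : 1 ≤ q ^ 3 := Nat.one_le_pow _ _ hq
  have : 1 ≤ q ^ 9 := Nat.one_le_pow _ _ hq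
  unfold cyclotomicNine
  zify [*]
  ring

theorem coprime_self (q : ℕ) : Nat.Coprime (cyclotomicNine q) q := by
  have h : cyclotomicNine q = 1 + q * (q ^ 5 + q ^ 2) := by unfold cyclotomicNine; ring
  rw [h, Nat.coprime_add_mul_left_left]
  exact Nat.coprime_one_left q

theorem gcd_pow_three_sub_one_dvd_three (q : ℕ) :
    Nat.gcd (cyclotomicNine q) (q ^ 3 - 1) ∣ 3 := by
  rcases Nat.eq_zero_or_pos q with rfl | hq
  · simp [cyclotomicNine]
  have h : cyclotomicNine q = (q ^ 3 - 1) * (q ^ 3 + 2) + 3 := by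
    have : 1 ≤ q ^ 3 := Nat.one_le_pow _ _ hq
    unfold cyclotomicNine
    zify [this]
    ring
  rw [h, Nat.gcd_comm, Nat.gcd_mul_left_add_right]
  exact Nat.gcd_dvd_right _ _

theorem gcd_pow_sub_one_dvd_three (q : ℕ) {k : ℕ} (hk : Nat.gcd 9 k ∣ 3) :
    Nat.gcd (cyclotomicNine q) (q ^ k - 1) ∣ 3 := by
  have h : Nat.gcd (q ^ 9 - 1) (q ^ k - 1) ∣ q ^ 3 - 1 := by
    rw [Nat.pow_sub_one_gcd_pow_sub_one, ← Nat.gcd_eq_left hk,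
      ← Nat.pow_sub_one_gcd_pow_sub_one]
    exact Nat.gcd_dvd_right _ _
  have hN := Nat.gcd_dvd_left (cyclotomicNine q) (q ^ k - 1)
  have h3 := (Nat.gcd_dvd_gcd_of_dvd_left _ (dvd_pow_nine_sub_one q)).trans h
  exact (Nat.dvd_gcd hN h3).trans (gcd_pow_three_sub_one_dvd_three q)

theorem mod_eq (q m : ℕ) : cyclotomicNine q % m = cyclotomicNine (q % m) % m := by
  simp [cyclotomicNine, Nat.add_mod, Nat.pow_mod]

theorem not_nine_dvd (q : ℕ) : ¬ 9 ∣ cyclotomicNine q := by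
  have key : ∀ r < 9, cyclotomicNine r % 9 ≠ 0 := by decide
  rw [Nat.dvd_iff_mod_eq_zero, mod_eq]
  exact key _ (Nat.mod_lt _ (by norm_num))

theorem three_dvd_iff {q : ℕ} (hq : 0 < q) : 3 ∣ cyclotomicNine q ↔ 3 ∣ q - 1 := by
  have key : ∀ r < 3, cyclotomicNine r % 3 = 0 ↔ r = 1 := by decide
  rw [Nat.dvd_iff_mod_eq_zero, mod_eq, key _ (Nat.mod_lt _ (by norm_num))]
  omega

theorem prime_dvd_three_of_dvd_mul {p q : ℕ} (hp : p.Prime) (hN : p ∣ cyclotomicNine q)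
    (hK : p ∣ q * (q ^ 5 - 1) * (q ^ 8 - 1) * (q ^ 12 - 1)) : p ∣ 3 := by
  have hpk : ∀ k, Nat.gcd 9 k ∣ 3 → p ∣ q ^ k - 1 → p ∣ 3 := fun k hk hdvd =>
    (Nat.dvd_gcd hN hdvd).trans (gcd_pow_sub_one_dvd_three q hk)
  rcases hp.dvd_mul.mp hK with hK | h12
  · rcases hp.dvd_mul.mp hK with hK | h8
    · rcases hp.dvd_mul.mp hK with hq | h5
      · exact absurd (Nat.eq_one_of_dvd_coprimes (coprime_self q) hN hq) hp.ne_one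
      · exact hpk 5 (by norm_num) h5
    · exact hpk 8 (by norm_num) h8
  · exact hpk 12 (by norm_num) h12

theorem gcd_three_sub_one_eq {q : ℕ} (hq : 0 < q) :
    Nat.gcd 3 (q - 1) = Nat.gcd 3 (cyclotomicNine q) := by
  by_cases h : 3 ∣ q - 1
  · rw [Nat.gcd_eq_left h, Nat.gcd_eq_left ((three_dvd_iff hq).mpr h)]
  · have h' : ¬ 3 ∣ cyclotomicNine q := mt (three_dvd_iff hq).mp h
    rw [(Nat.prime_three.coprime_iff_not_dvd.mpr h).gcd_eq_one,
      (Nat.prime_three.coprime_iff_not_dvd.mpr h').gcd_eq_one]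

end cyclotomicNine

open cyclotomicNine in
theorem E6_components_coprime_general (q : ℕ) (hq2 : 2 ≤ q) :
    Nat.Coprime ((q ^ 6 + q ^ 3 + 1) / Nat.gcd 3 (q - 1))
      (q * (q ^ 5 - 1) * (q ^ 8 - 1) * (q ^ 12 - 1)) := by
  change Nat.Coprime (cyclotomicNine q / _) _
  rw [gcd_three_sub_one_eq (by omega)]
  have h3 : ¬ 3 ∣ cyclotomicNine q / Nat.gcd 3 (cyclotomicNine q) :=
    Nat.prime_three.not_dvd_div_gcd (not_nine_dvd q)
  refine Nat.coprime_of_dvd fun p hp hpM hpK => h3 ?_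
  have hpN := hpM.trans (Nat.div_dvd_of_dvd (Nat.gcd_dvd_right 3 _))
  have hp3 : p = 3 :=
    (Nat.prime_dvd_prime_iff_eq hp Nat.prime_three).mp (prime_dvd_three_of_dvd_mul hp hpN hpK)
  rwa [hp3] at hpM

/-- For a prime power `q ≥ 2`, `(q^6 + q^3 + 1)/gcd(3, q-1)` is coprime to
`q (q^5-1)(q^8-1)(q^12-1)`. -/
theorem E6_components_coprime (q : ℕ) (hq : IsPrimePow q) (hq2 : 2 ≤ q) :
    Nat.Coprime ((q ^ 6 + q ^ 3 + 1) / Nat.gcd 3 (q - 1))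
      (q * (q ^ 5 - 1) * (q ^ 8 - 1) * (q ^ 12 - 1)) :=
  E6_components_coprime_general q hq2
end

section
/- For every prime power q ≥ 2, the integer (q^6 - q^3 + 1)/gcd(3, q+1) is coprime to q*(q^5 + 1)*(q^8 - 1)*(q^12 - 1). -/
/-- For a prime power `q ≥ 2`, `(q^6 - q^3 + 1)/gcd(3, q+1)` is coprime to
`q (q^5+1)(q^8-1)(q^12-1)`. -/
theorem twistedE6_components_coprime (q : ℕ) (hq : IsPrimePow q) (hq2 : 2 ≤ q) :
    Nat.Coprime ((q ^ 6 - q ^ 3 + 1) / Nat.gcd 3 (q + 1))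
      (q * (q ^ 5 + 1) * (q ^ 8 - 1) * (q ^ 12 - 1)) := by
  have h36 : q ^ 3 ≤ q ^ 6 := Nat.pow_le_pow_right (by omega) (by norm_num)
  have h6 : q ^ 6 % 9 = (q % 9) ^ 6 % 9 := by rw [Nat.pow_mod]
  have h3 : q ^ 3 % 9 = (q % 9) ^ 3 % 9 := by rw [Nat.pow_mod]
  set Φ := q ^ 6 - q ^ 3 + 1 with hΦdef
  set d := Nat.gcd 3 (q + 1) with hddef
  have hdd : (d = 3 ∧ Φ % 9 = 3) ∨ (d = 1 ∧ Φ % 3 = 1) := by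
    have hcases : q % 9 = 0 ∨ q % 9 = 1 ∨ q % 9 = 2 ∨ q % 9 = 3 ∨ q % 9 = 4 ∨
        q % 9 = 5 ∨ q % 9 = 6 ∨ q % 9 = 7 ∨ q % 9 = 8 := by omega
    rcases hcases with h | h | h | h | h | h | h | h | h <;>
      rw [h] at h6 h3 <;> norm_num at h6 h3 <;>
      [skip; skip; skip; skip; skip; skip; skip; skip; skip] <;>
      first
      | (left; refine ⟨Nat.gcd_eq_left (by omega), by omega⟩)
      | (right; refine ⟨Nat.prime_three.coprime_iff_not_dvd.mpr (by omega), by omega⟩)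
  have hdΦ : d ∣ Φ := by
    rcases hdd with ⟨hd3, hm⟩ | ⟨hd1, _⟩
    · rw [hd3]; omega
    · rw [hd1]; exact one_dvd _
  set A := Φ / d with hAdef
  have hAΦ : A ∣ Φ := Nat.div_dvd_of_dvd hdΦ
  have hA3 : Nat.Coprime A 3 := by
    have h3A : ¬ 3 ∣ A := by
      rcases hdd with ⟨hd3, hm⟩ | ⟨hd1, hm⟩
      · rw [hAdef, hd3]
        have hdvd : 3 ∣ Φ := by omega
        have hmul : Φ = 3 * (Φ / 3) := (Nat.mul_div_cancel' hdvd).symm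
        rintro ⟨k, hk⟩
        omega
      · rw [hAdef, hd1, Nat.div_one]
        omega
    exact Nat.coprime_comm.mp (Nat.prime_three.coprime_iff_not_dvd.mpr h3A)
  have hΦz : ((Φ : ℕ) : ℤ) = (q : ℤ) ^ 6 - (q : ℤ) ^ 3 + 1 := by
    rw [hΦdef]; push_cast [h36]; ring
  have hco : ∀ F : ℕ, (∀ g : ℕ, g ∣ Φ → g ∣ F → g ∣ 3) → Nat.Coprime A F := by
    intro F hF
    have hg := hF (Nat.gcd A F) ((Nat.gcd_dvd_left A F).trans hAΦ) (Nat.gcd_dvd_right A F)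
    have hdg : Nat.gcd A F ∣ Nat.gcd A 3 := Nat.dvd_gcd (Nat.gcd_dvd_left A F) hg
    have hA3' : Nat.gcd A 3 = 1 := hA3
    rw [hA3'] at hdg
    exact Nat.eq_one_of_dvd_one hdg
  -- coprime to q
  have coq : Nat.Coprime A q := by
    have hg1 : ((Nat.gcd A q : ℕ) : ℤ) ∣ (q : ℤ) ^ 6 - (q : ℤ) ^ 3 + 1 := by
      rw [← hΦz]
      exact_mod_cast Int.natCast_dvd_natCast.mpr ((Nat.gcd_dvd_left A q).trans hAΦ)
    have hg2 : ((Nat.gcd A q : ℕ) : ℤ) ∣ (q : ℤ) := Int.natCast_dvd_natCast.mpr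
      (Nat.gcd_dvd_right A q)
    have key : ((Nat.gcd A q : ℕ) : ℤ) ∣ 1 := by
      have h := dvd_sub hg1 (hg2.mul_left ((q : ℤ) ^ 5 - (q : ℤ) ^ 2))
      have e : ((q : ℤ) ^ 6 - (q : ℤ) ^ 3 + 1) - ((q : ℤ) ^ 5 - (q : ℤ) ^ 2) * (q : ℤ) = 1 := by
        ring
      rwa [e] at h
    exact Nat.eq_one_of_dvd_one (by exact_mod_cast key)
  -- coprime to q^5 + 1
  have co5 : Nat.Coprime A (q ^ 5 + 1) := by
    apply hco
    intro g hgΦ hgF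
    have h1 : (g : ℤ) ∣ (q : ℤ) ^ 6 - (q : ℤ) ^ 3 + 1 := by
      rw [← hΦz]; exact_mod_cast Int.natCast_dvd_natCast.mpr hgΦ
    have h2 : (g : ℤ) ∣ (q : ℤ) ^ 5 + 1 := by
      have := Int.natCast_dvd_natCast.mpr hgF
      push_cast at this
      exact this
    have key : (g : ℤ) ∣ 3 := by
      have h := dvd_add
        (h1.mul_left (2 + (q : ℤ) - (q : ℤ) ^ 2 + (q : ℤ) ^ 3 + 2 * (q : ℤ) ^ 4))
        (h2.mul_left (1 - (q : ℤ) + (q : ℤ) ^ 2 + (q : ℤ) ^ 3 - (q : ℤ) ^ 4 - 2 * (q : ℤ) ^ 5))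
      have e : (2 + (q : ℤ) - (q : ℤ) ^ 2 + (q : ℤ) ^ 3 + 2 * (q : ℤ) ^ 4) *
            ((q : ℤ) ^ 6 - (q : ℤ) ^ 3 + 1) +
          (1 - (q : ℤ) + (q : ℤ) ^ 2 + (q : ℤ) ^ 3 - (q : ℤ) ^ 4 - 2 * (q : ℤ) ^ 5) *
            ((q : ℤ) ^ 5 + 1) = 3 := by ring
      rwa [e] at h
    exact_mod_cast key
  -- coprime to q^8 - 1
  have co8 : Nat.Coprime A (q ^ 8 - 1) := by
    apply hco
    intro g hgΦ hgF
    have h8 : 1 ≤ q ^ 8 := Nat.one_le_pow _ _ (by omega)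
    have h1 : (g : ℤ) ∣ (q : ℤ) ^ 6 - (q : ℤ) ^ 3 + 1 := by
      rw [← hΦz]; exact_mod_cast Int.natCast_dvd_natCast.mpr hgΦ
    have h2 : (g : ℤ) ∣ (q : ℤ) ^ 8 - 1 := by
      have := Int.natCast_dvd_natCast.mpr hgF
      push_cast [h8] at this
      exact this
    have key : (g : ℤ) ∣ 3 := by
      have h := dvd_add
        (h1.mul_left (2 - 2 * (q : ℤ) + 2 * (q : ℤ) ^ 2 + (q : ℤ) ^ 3 - (q : ℤ) ^ 4 +
          (q : ℤ) ^ 5 - (q : ℤ) ^ 6 + (q : ℤ) ^ 7))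
        (h2.mul_left (-1 - 2 * (q : ℤ) + 2 * (q : ℤ) ^ 2 - (q : ℤ) ^ 3 + (q : ℤ) ^ 4 -
          (q : ℤ) ^ 5))
      have e : (2 - 2 * (q : ℤ) + 2 * (q : ℤ) ^ 2 + (q : ℤ) ^ 3 - (q : ℤ) ^ 4 +
            (q : ℤ) ^ 5 - (q : ℤ) ^ 6 + (q : ℤ) ^ 7) * ((q : ℤ) ^ 6 - (q : ℤ) ^ 3 + 1) +
          (-1 - 2 * (q : ℤ) + 2 * (q : ℤ) ^ 2 - (q : ℤ) ^ 3 + (q : ℤ) ^ 4 - (q : ℤ) ^ 5) *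
            ((q : ℤ) ^ 8 - 1) = 3 := by ring
      rwa [e] at h
    exact_mod_cast key
  -- coprime to q^12 - 1
  have co12 : Nat.Coprime A (q ^ 12 - 1) := by
    apply hco
    intro g hgΦ hgF
    have h12 : 1 ≤ q ^ 12 := Nat.one_le_pow _ _ (by omega)
    have h1 : (g : ℤ) ∣ (q : ℤ) ^ 6 - (q : ℤ) ^ 3 + 1 := by
      rw [← hΦz]; exact_mod_cast Int.natCast_dvd_natCast.mpr hgΦ
    have h2 : (g : ℤ) ∣ (q : ℤ) ^ 12 - 1 := by
      have := Int.natCast_dvd_natCast.mpr hgF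
      push_cast [h12] at this
      exact this
    have key : (g : ℤ) ∣ 3 := by
      have h := dvd_add
        (h1.mul_left (1 + 2 * (q : ℤ) ^ 3 + (q : ℤ) ^ 6 - (q : ℤ) ^ 9))
        (h2.mul_left (-2 + (q : ℤ) ^ 3))
      have e : (1 + 2 * (q : ℤ) ^ 3 + (q : ℤ) ^ 6 - (q : ℤ) ^ 9) *
            ((q : ℤ) ^ 6 - (q : ℤ) ^ 3 + 1) +
          (-2 + (q : ℤ) ^ 3) * ((q : ℤ) ^ 12 - 1) = 3 := by ring
      rwa [e] at h
    exact_mod_cast key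
  exact ((coq.mul_right co5).mul_right co8).mul_right co12
end

section
/- Let G be a finite Frobenius group with kernel K and complement C. Then G has no element of order t*r where t is a prime dividing |K| and r is a prime dividing |C|. -/
open Subgroup MulAction Pointwise

/-- If `C` acts fixed-point-freely on the normal subgroup `K` by conjugation, then for every
prime `p` dividing `|C|` we have `|K| ≡ 1 (mod p)`. -/
private theorem frobenius_aux_kmod {G : Type*} [Group G] [Finite G]
    (K C : Subgroup G) (hKn : K.Normal)
    (hfpf : ∀ c ∈ C, c ≠ (1 : G) → ∀ k ∈ K, k ≠ (1 : G) → c * k * c⁻¹ ≠ k)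
    (p : ℕ) (hp : p.Prime) (hpC : p ∣ Nat.card C) :
    Nat.card K ≡ 1 [MOD p] := by
  haveI : Fact p.Prime := ⟨hp⟩
  obtain ⟨c, hc⟩ := exists_prime_orderOf_dvd_card' (G := C) p hpC
  have hcG : orderOf (c : G) = p := (Subgroup.orderOf_coe c).trans hc
  have hcne : (c : G) ≠ 1 := by
    intro h
    rw [h, orderOf_one] at hcG
    exact hp.one_lt.ne' hcG.symm
  set H : Subgroup G := Subgroup.zpowers (c : G) with hH
  have hPG : IsPGroup p H :=
    IsPGroup.of_card (((Nat.card_zpowers (c : G)).trans hcG).trans (pow_one p).symm)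
  letI : MulAction H K :=
    MulAction.compHom K ((MulAut.conjNormal (H := K)).comp H.subtype)
  have hmod : Nat.card K ≡ Nat.card (fixedPoints H K) [MOD p] :=
    hPG.card_modEq_card_fixedPoints K
  have hfix : fixedPoints H K = {1} := by
    ext k
    simp only [Set.mem_singleton_iff]
    constructor
    · intro hk
      by_contra hk1
      have hkne : (k : G) ≠ 1 := fun h => hk1 (Subtype.ext h)
      have h1 : (⟨(c : G), Subgroup.mem_zpowers _⟩ : H) • k = k := hk _
      have h2 : (c : G) * (k : G) * (c : G)⁻¹ = (k : G) := by
        rw [← MulAut.conjNormal_apply]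
        exact congrArg Subtype.val h1
      exact hfpf (c : G) c.2 hcne (k : G) k.2 hkne h2
    · rintro rfl
      intro σ
      apply Subtype.ext
      rw [show ((σ • (1 : K) : K) : G) = (σ : G) * ((1 : K) : G) * (σ : G)⁻¹ from
        MulAut.conjNormal_apply _ _]
      simp
  rw [hfix] at hmod
  simpa using hmod

/-- In a finite Frobenius group `G = K ⋊ C` (with `C` acting fixed-point-freely on the
kernel `K`), there is no element of order `t * r` with `t` a prime dividing `|K|` and
`r` a prime dividing `|C|`. -/
theorem frobenius_no_mixed_order {G : Type*} [Group G] [Finite G]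
    (K C : Subgroup G) (hKn : K.Normal)
    (hdisj : K ⊓ C = ⊥) (hsup : K ⊔ C = ⊤)
    (hCne : C ≠ ⊥) (hCnt : C ≠ ⊤)
    (hfpf : ∀ c ∈ C, c ≠ (1 : G) → ∀ k ∈ K, k ≠ (1 : G) → c * k * c⁻¹ ≠ k)
    (t r : ℕ) (ht : t.Prime) (hr : r.Prime)
    (htK : t ∣ Nat.card K) (hrC : r ∣ Nat.card C) :
    ¬ ∃ g : G, orderOf g = t * r := by
  rintro ⟨g, hg⟩
  haveI : Fact r.Prime := ⟨hr⟩
  -- |K| ≡ 1 mod any prime dividing |C|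
  have hrK : ¬ r ∣ Nat.card K := by
    intro h
    have h1 := frobenius_aux_kmod K C hKn hfpf r hr hrC
    have h0 : Nat.card K ≡ 0 [MOD r] := (Nat.modEq_zero_iff_dvd).mpr h
    have : (0 : ℕ) ≡ 1 [MOD r] := h0.symm.trans h1
    have := this.symm
    rw [Nat.ModEq] at this
    simp [Nat.one_mod_eq_one.mpr hr.one_lt.ne'] at this
  have htC : ¬ t ∣ Nat.card C := by
    intro h
    have h1 := frobenius_aux_kmod K C hKn hfpf t ht h
    have h0 : Nat.card K ≡ 0 [MOD t] := (Nat.modEq_zero_iff_dvd).mpr htK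
    have : (0 : ℕ) ≡ 1 [MOD t] := h0.symm.trans h1
    have := this.symm
    rw [Nat.ModEq] at this
    simp [Nat.one_mod_eq_one.mpr ht.one_lt.ne'] at this
  -- the two commuting elements
  set x : G := g ^ r with hxdef
  set y : G := g ^ t with hydef
  have hx : orderOf x = t := by
    rw [hxdef, orderOf_pow, hg, Nat.gcd_eq_right (dvd_mul_left r t),
      Nat.mul_div_cancel _ hr.pos]
  have hy : orderOf y = r := by
    rw [hydef, orderOf_pow, hg, Nat.gcd_eq_right (dvd_mul_right t r),
      Nat.mul_div_cancel_left _ ht.pos]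
  have hxney : x ≠ 1 := by
    intro h; rw [h, orderOf_one] at hx; exact ht.one_lt.ne' hx.symm
  have hyney : y ≠ 1 := by
    intro h; rw [h, orderOf_one] at hy; exact hr.one_lt.ne' hy.symm
  -- |G ⧸ K| = |C|
  have hmulset : (K : Set G) * (C : Set G) = Set.univ := by
    rw [← Subgroup.normal_mul, hsup, Subgroup.coe_top]
  let f : C →* G ⧸ K := (QuotientGroup.mk' K).comp C.subtype
  have hfinj : Function.Injective f := by
    rw [← MonoidHom.ker_eq_bot_iff]
    ext c
    simp only [MonoidHom.mem_ker, Subgroup.mem_bot]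
    constructor
    · intro hc
      have h1 : (c : G) ∈ K := (QuotientGroup.eq_one_iff _).mp hc
      have h2 : (c : G) ∈ K ⊓ C := ⟨h1, c.2⟩
      rw [hdisj, Subgroup.mem_bot] at h2
      exact Subtype.ext h2
    · rintro rfl
      simp [f]
  have hfsurj : Function.Surjective f := by
    intro q
    obtain ⟨a, rfl⟩ := QuotientGroup.mk'_surjective K q
    have ha : a ∈ (K : Set G) * (C : Set G) := by rw [hmulset]; trivial
    obtain ⟨k, hk, c, hc, rfl⟩ := ha
    refine ⟨⟨c, hc⟩, ?_⟩
    show QuotientGroup.mk' K c = QuotientGroup.mk' K (k * c)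
    apply (QuotientGroup.eq (s := K)).mpr
    have heq : c⁻¹ * (k * c) = c⁻¹ * k * c := by group
    rw [heq]
    exact hKn.conj_mem' k hk c
  have hcardQuot : Nat.card (G ⧸ K) = Nat.card C :=
    (Nat.card_congr (Equiv.ofBijective f ⟨hfinj, hfsurj⟩)).symm
  -- x ∈ K
  have hxK : x ∈ K := by
    have hdvd1 : orderOf ((QuotientGroup.mk' K) x) ∣ t := hx ▸ orderOf_map_dvd _ x
    have hdvd2 : orderOf ((QuotientGroup.mk' K) x) ∣ Nat.card C :=
      hcardQuot ▸ orderOf_dvd_natCard _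
    rcases (Nat.Prime.eq_one_or_self_of_dvd ht _ hdvd1) with h1 | h1
    · rw [← QuotientGroup.eq_one_iff, ← orderOf_eq_one_iff]
      exact h1
    · exact absurd (h1 ▸ hdvd2) htC
  -- Sylow r-subgroup inside C
  have hcardG : Nat.card K * Nat.card C = Nat.card G :=
    (Subgroup.isComplement'_of_disjoint_and_mul_eq_univ (disjoint_iff.mpr hdisj)
      hmulset).card_mul
  have hfact : (Nat.card G).factorization r = (Nat.card C).factorization r := by
    rw [← hcardG, Nat.factorization_mul Nat.card_pos.ne' Nat.card_pos.ne']
    simp [Nat.factorization_eq_zero_of_not_dvd hrK]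
  obtain ⟨Q₀⟩ : Nonempty (Sylow r C) := inferInstance
  set Q : Subgroup G := (Q₀ : Subgroup C).map C.subtype with hQdef
  have hQC : Q ≤ C := by
    rintro _ ⟨q, hq, rfl⟩
    exact q.2
  have hQcard : Nat.card Q = r ^ (Nat.card G).factorization r := by
    rw [hfact, ← Q₀.card_eq_multiplicity]
    exact (Nat.card_congr (Subgroup.equivMapOfInjective (Q₀ : Subgroup C) C.subtype
      C.subtype_injective).toEquiv).symm
  let Q' : Sylow r G := Sylow.ofCard Q hQcard
  -- ⟨y⟩ is inside some Sylow r-subgroup, conjugate it into Q' ≤ C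
  have hyP : IsPGroup r (Subgroup.zpowers y) :=
    IsPGroup.of_card (((Nat.card_zpowers y).trans hy).trans (pow_one r).symm)
  obtain ⟨P, hP⟩ := hyP.exists_le_sylow
  obtain ⟨h, hh⟩ := MulAction.exists_smul_eq G P Q'
  have hzQ' : h * y * h⁻¹ ∈ (Q' : Subgroup G) := by
    rw [← hh, Sylow.coe_subgroup_smul, Subgroup.mem_pointwise_smul_iff_inv_smul_mem]
    have : (MulAut.conj h)⁻¹ • (h * y * h⁻¹) = y := by
      simp [MulAut.smul_def, MulAut.conj_inv_apply]
      group
    rw [this]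
    exact hP (Subgroup.mem_zpowers y)
  have hzC : h * y * h⁻¹ ∈ C := hQC hzQ'
  have hzne : h * y * h⁻¹ ≠ 1 := by
    intro hz
    apply hyney
    have := congrArg (fun w => h⁻¹ * w * h) hz
    simpa [mul_assoc] using this
  have hx'K : h * x * h⁻¹ ∈ K := hKn.conj_mem x hxK h
  have hx'ne : h * x * h⁻¹ ≠ 1 := by
    intro hz
    apply hxney
    have := congrArg (fun w => h⁻¹ * w * h) hz
    simpa [mul_assoc] using this
  have hcomm : y * x = x * y := by
    rw [hxdef, hydef, ← pow_add, ← pow_add, Nat.add_comm]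
  refine hfpf (h * y * h⁻¹) hzC hzne (h * x * h⁻¹) hx'K hx'ne ?_
  calc (h * y * h⁻¹) * (h * x * h⁻¹) * (h * y * h⁻¹)⁻¹
      = h * (y * x * y⁻¹) * h⁻¹ := by group
    _ = h * (x * (y * y⁻¹)) * h⁻¹ := by rw [hcomm]; group
    _ = h * x * h⁻¹ := by group
end

section
/- Let G be a finite group whose Gruenberg–Kegel (prime) graph is disconnected and suppose G = K ⋊ C where K is nontrivial nilpotent and C acts fixed-point-freely on K (G Frobenius with kernel K, complement C). Then the set of primes dividing |K| is a union of connected components of the prime graph of G, and in fact π(K) is a single connected component since K is nilpotent. -/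
open Subgroup Pointwise

/-- A fixed-point-free coprime-action lemma: if `C` acts fixed-point-freely on the
normal subgroup `K` by conjugation, then `|K|` and `|C|` are coprime. -/
theorem aux_coprime_card {G : Type*} [Group G] [Finite G]
    (K C : Subgroup G) (hKn : K.Normal)
    (hfpf : ∀ c ∈ C, c ≠ (1 : G) → ∀ k ∈ K, k ≠ (1 : G) → c * k * c⁻¹ ≠ k) :
    Nat.Coprime (Nat.card K) (Nat.card C) := by
  by_contra hnc
  obtain ⟨p, hp, hpd⟩ := Nat.exists_prime_and_dvd (n := Nat.gcd (Nat.card K) (Nat.card C)) hnc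
  haveI : Fact p.Prime := ⟨hp⟩
  have hpK : p ∣ Nat.card K := hpd.trans (Nat.gcd_dvd_left _ _)
  have hpC : p ∣ Nat.card C := hpd.trans (Nat.gcd_dvd_right _ _)
  obtain ⟨c₀, hc₀⟩ := exists_prime_orderOf_dvd_card' (G := C) p hpC
  set c : G := (c₀ : G) with hcdef
  have hc : orderOf c = p := by rw [hcdef, Subgroup.orderOf_coe, hc₀]
  have hcC : c ∈ C := c₀.2
  have hcne : c ≠ 1 := by
    intro h
    rw [h, orderOf_one] at hc
    exact hp.one_lt.ne' hc.symm
  haveI := hKn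
  set P : Subgroup G := Subgroup.zpowers c with hPdef
  let φ : P →* MulAut K := MulAut.conjNormal.comp P.subtype
  letI : MulAction P K := MulAction.compHom K φ
  have hsmul : ∀ (z : P) (k : K), z • k = φ z k := fun z k => rfl
  have hPp : IsPGroup p P := IsPGroup.of_card (by
    rw [hPdef, Nat.card_zpowers, hc, pow_one])
  have key := hPp.card_modEq_card_fixedPoints K
  have hfix : MulAction.fixedPoints P K = {1} := by
    ext k
    simp only [Set.mem_singleton_iff, MulAction.mem_fixedPoints]
    constructor
    · intro hk
      by_contra hkne
      have hkg : (k : G) ≠ 1 := by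
        intro h
        exact hkne (Subtype.ext h)
      have h1 := hk ⟨c, Subgroup.mem_zpowers c⟩
      rw [hsmul] at h1
      have h2 : c * (k : G) * c⁻¹ = (k : G) := by
        have := congrArg (Subtype.val) h1
        simpa [φ, MulAut.conjNormal_apply] using this
      exact hfpf c hcC hcne (k : G) k.2 hkg h2
    · intro hk z
      rw [hk, hsmul, map_one]
  have hone : Nat.card (MulAction.fixedPoints P K) = 1 := by
    rw [hfix]; simp
  rw [hone] at key
  have h0 : Nat.card K ≡ 0 [MOD p] := (Nat.modEq_zero_iff_dvd).mpr hpK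
  have : (1 : ℕ) ≡ 0 [MOD p] := key.symm.trans h0
  have : p ∣ 1 := (Nat.modEq_zero_iff_dvd).mp this
  exact hp.one_lt.ne' (Nat.eq_one_of_dvd_one this)

/-- In a finite Frobenius group `G = K ⋊ C` with nontrivial nilpotent kernel `K`
and disconnected prime graph, the set of primes dividing `|K|` forms a single
connected component of the prime graph of `G`: the primes of `K` are pairwise
adjacent, and no prime of `K` is adjacent to a prime outside `π(K)`. -/
theorem frobenius_kernel_component {G : Type*} [Group G] [Finite G]
    (K C : Subgroup G) (hKn : K.Normal) (hKnontriv : K ≠ ⊥)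
    (hKnilp : Group.IsNilpotent K)
    (hdisj : K ⊓ C = ⊥) (hsup : K ⊔ C = ⊤)
    (hCne : C ≠ ⊥) (hCnt : C ≠ ⊤)
    (hfpf : ∀ c ∈ C, c ≠ (1 : G) → ∀ k ∈ K, k ≠ (1 : G) → c * k * c⁻¹ ≠ k)
    (hdisc : ∃ A B : Set ℕ, A.Nonempty ∧ B.Nonempty ∧ Disjoint A B ∧
      (∀ p : ℕ, (p.Prime ∧ p ∣ Nat.card G) ↔ p ∈ A ∪ B) ∧
      ∀ p ∈ A, ∀ q ∈ B, ¬ ∃ g : G, orderOf g = p * q) :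
    (∀ t₁ t₂ : ℕ, t₁.Prime → t₂.Prime → t₁ ∣ Nat.card K → t₂ ∣ Nat.card K →
        t₁ ≠ t₂ → ∃ g : G, orderOf g = t₁ * t₂) ∧
    (∀ t r : ℕ, t.Prime → r.Prime → t ∣ Nat.card K → r ∣ Nat.card G →
        ¬ r ∣ Nat.card K → ¬ ∃ g : G, orderOf g = t * r) := by
  haveI := hKn
  constructor
  · -- Part 1: primes of the nilpotent kernel are pairwise adjacent
    intro t₁ t₂ hp₁ hp₂ hd₁ hd₂ hne
    haveI : Fact t₁.Prime := ⟨hp₁⟩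
    haveI : Fact t₂.Prime := ⟨hp₂⟩
    have hnorm : ∀ (p : ℕ) (_ : Fact p.Prime) (P : Sylow p K), (↑P : Subgroup K).Normal :=
      ((isNilpotent_of_finite_tfae (G := K)).out 0 3).mp hKnilp
    obtain ⟨P₁⟩ : Nonempty (Sylow t₁ K) := inferInstance
    obtain ⟨P₂⟩ : Nonempty (Sylow t₂ K) := inferInstance
    have hKcard : Nat.card K ≠ 0 := Nat.card_pos.ne'
    have hdvd₁ : t₁ ∣ Nat.card (↑P₁ : Subgroup K) := by
      rw [Sylow.card_eq_multiplicity]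
      exact dvd_pow_self t₁ (Nat.Prime.factorization_pos_of_dvd hp₁ hKcard hd₁).ne'
    have hdvd₂ : t₂ ∣ Nat.card (↑P₂ : Subgroup K) := by
      rw [Sylow.card_eq_multiplicity]
      exact dvd_pow_self t₂ (Nat.Prime.factorization_pos_of_dvd hp₂ hKcard hd₂).ne'
    obtain ⟨x, hx⟩ := exists_prime_orderOf_dvd_card' (G := (↑P₁ : Subgroup K)) t₁ hdvd₁
    obtain ⟨y, hy⟩ := exists_prime_orderOf_dvd_card' (G := (↑P₂ : Subgroup K)) t₂ hdvd₂
    have hxo : orderOf ((x : K) : G) = t₁ := by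
      rw [Subgroup.orderOf_coe, Subgroup.orderOf_coe, hx]
    have hyo : orderOf ((y : K) : G) = t₂ := by
      rw [Subgroup.orderOf_coe, Subgroup.orderOf_coe, hy]
    have hcomm : Commute ((x : K) : G) ((y : K) : G) := by
      have hc : Commute (x : K) (y : K) :=
        Subgroup.commute_of_normal_of_disjoint _ _ (hnorm t₁ ⟨hp₁⟩ P₁) (hnorm t₂ ⟨hp₂⟩ P₂)
          (IsPGroup.disjoint_of_ne t₁ t₂ hne _ _ P₁.isPGroup' P₂.isPGroup')
          (x : K) (y : K) x.2 y.2
      exact congrArg Subtype.val hc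
    refine ⟨((x : K) : G) * ((y : K) : G), ?_⟩
    rw [hcomm.orderOf_mul_eq_mul_orderOf_of_coprime (by
      rw [hxo, hyo]; exact (Nat.coprime_primes hp₁ hp₂).mpr hne), hxo, hyo]
  · -- Part 2: no edge from a prime of K to a prime outside π(K)
    intro t r hpt hpr htK hrG hrK
    rintro ⟨g, hg⟩
    haveI : Fact r.Prime := ⟨hpr⟩
    have hcop := aux_coprime_card K C hKn hfpf
    have comp : Subgroup.IsComplement' K C := by
      apply Subgroup.isComplement'_of_disjoint_and_mul_eq_univ (disjoint_iff.mpr hdisj)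
      rw [← Subgroup.normal_mul, hsup, Subgroup.coe_top]
    have hmul : Nat.card K * Nat.card C = Nat.card G := comp.card_mul
    have htr : t ≠ r := fun h => hrK (h ▸ htK)
    -- the two "coordinates" of g
    set x : G := g ^ r with hxdef
    set y : G := g ^ t with hydef
    have hxo : orderOf x = t := by
      rw [hxdef, orderOf_pow, hg, Nat.gcd_eq_right (dvd_mul_left r t),
        Nat.mul_div_cancel _ hpr.pos]
    have hyo : orderOf y = r := by
      rw [hydef, orderOf_pow, hg, Nat.gcd_eq_right (dvd_mul_right t r),
        Nat.mul_div_cancel_left _ hpt.pos]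
    have hcomm : Commute y x := (Commute.refl g).pow_pow t r
    -- x lies in K
    have hxK : x ∈ K := by
      rw [← QuotientGroup.eq_one_iff]
      have h1 : orderOf ((x : G) : G ⧸ K) ∣ t := by
        rw [← hxo]; exact orderOf_map_dvd (QuotientGroup.mk' K) x
      have h2 : orderOf ((x : G) : G ⧸ K) ∣ Nat.card C := by
        have := orderOf_dvd_natCard ((x : G) : G ⧸ K)
        rwa [show Nat.card (G ⧸ K) = Nat.card C from by
          rw [← comp.symm.index_eq_card]; rfl] at this
      have hco : Nat.Coprime t (Nat.card C) := Nat.Coprime.coprime_dvd_left htK hcop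
      rw [← orderOf_eq_one_iff]
      exact Nat.eq_one_of_dvd_one (hco ▸ Nat.dvd_gcd h1 h2)
    have hxne : x ≠ 1 := by
      intro h
      rw [h, orderOf_one] at hxo
      exact hpt.one_lt.ne' hxo.symm
    have hyne : y ≠ 1 := by
      intro h
      rw [h, orderOf_one] at hyo
      exact hpr.one_lt.ne' hyo.symm
    -- a Sylow r-subgroup of C is a Sylow r-subgroup of G
    obtain ⟨T⟩ : Nonempty (Sylow r C) := inferInstance
    set T' : Subgroup G := (↑T : Subgroup C).map C.subtype with hT'def
    have hT'le : T' ≤ C := Subgroup.map_subtype_le _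
    have hT'card : Nat.card T' = Nat.card (↑T : Subgroup C) :=
      (Nat.card_congr (Subgroup.equivMapOfInjective _ C.subtype C.subtype_injective).toEquiv).symm
    have hfact : (Nat.card G).factorization r = (Nat.card C).factorization r := by
      rw [← hmul, Nat.factorization_mul Nat.card_pos.ne' Nat.card_pos.ne']
      simp [Nat.factorization_eq_zero_of_not_dvd hrK]
    have hT'card' : Nat.card T' = r ^ (Nat.card G).factorization r := by
      rw [hT'card, Sylow.card_eq_multiplicity, hfact]
    set T'' : Sylow r G := Sylow.ofCard T' hT'card' with hT''def
    -- a Sylow r-subgroup of G containing y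
    have hyP : IsPGroup r (Subgroup.zpowers y) :=
      IsPGroup.of_card (by rw [Nat.card_zpowers, hyo, pow_one])
    obtain ⟨S, hS⟩ := hyP.exists_le_sylow
    obtain ⟨gg, hgg⟩ := MulAction.exists_smul_eq G T'' S
    have hySsub : y ∈ (↑S : Subgroup G) := hS (Subgroup.mem_zpowers y)
    have hySmul : y ∈ MulAut.conj gg • T' := by
      have : (↑(gg • T'') : Subgroup G) = ↑S := by rw [hgg]
      rw [Sylow.coe_subgroup_smul, Sylow.coe_ofCard] at this
      rw [this]
      exact hySsub
    rw [Subgroup.mem_pointwise_smul_iff_inv_smul_mem] at hySmul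
    have hc'mem : (MulAut.conj gg)⁻¹ y ∈ C := hT'le hySmul
    set c' : G := (MulAut.conj gg)⁻¹ y with hc'def
    have hc'eq : c' = gg⁻¹ * y * gg := by
      rw [hc'def, ← MulAut.conj_symm_apply]
      rfl
    have hc'ne : c' ≠ 1 := by
      rw [hc'eq]
      intro h
      apply hyne
      have := congrArg (fun z => gg * z * gg⁻¹) h
      simpa [mul_assoc] using this
    -- transport x by gg⁻¹
    set k₀ : G := gg⁻¹ * x * gg with hk₀def
    have hk₀K : k₀ ∈ K := by
      have := hKn.conj_mem x hxK gg⁻¹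
      simpa [hk₀def] using this
    have hk₀ne : k₀ ≠ 1 := by
      rw [hk₀def]
      intro h
      apply hxne
      have := congrArg (fun z => gg * z * gg⁻¹) h
      simpa [mul_assoc] using this
    -- derive the fixed point, contradicting fpf
    apply hfpf c' hc'mem hc'ne k₀ hk₀K hk₀ne
    rw [hc'eq, hk₀def]
    have hyx : y * x * y⁻¹ = x := by
      rw [hcomm.eq]
      group
    calc gg⁻¹ * y * gg * (gg⁻¹ * x * gg) * (gg⁻¹ * y * gg)⁻¹
        = gg⁻¹ * (y * x * y⁻¹) * gg := by group
      _ = gg⁻¹ * x * gg := by rw [hyx]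
end

section
/- For every odd prime power q = p^n, the π₂-part of |F_4(q)| equals q^4 - q^2 + 1 exactly, i.e., (q^4 - q^2 + 1)^2 does not divide |F_4(q)| = q^24 (q^2-1)(q^6-1)(q^8-1)(q^12-1). -/
/-- For an odd prime power `q`, `(q^4 - q^2 + 1)^2` does not divide `|F_4(q)|`. -/
theorem F4_pi2_part_exact (p n q : ℕ) (hp : p.Prime) (hodd : Odd p)
    (hn : 0 < n) (hq : q = p ^ n) :
    ¬ ((q ^ 4 - q ^ 2 + 1) ^ 2 ∣
        q ^ 24 * (q ^ 2 - 1) * (q ^ 6 - 1) * (q ^ 8 - 1) * (q ^ 12 - 1)) := by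
  intro h
  have hp3 : 3 ≤ p := by
    have h2 := hp.two_le
    rcases hodd with ⟨t, ht⟩
    omega
  have hq3 : 3 ≤ q := by
    subst hq
    calc 3 ≤ p := hp3
      _ ≤ p ^ n := Nat.le_self_pow hn.ne' p
  have hqodd : Odd q := hq ▸ hodd.pow
  have h24 : q ^ 2 ≤ q ^ 4 := Nat.pow_le_pow_right (by omega) (by omega)
  have hs2 : 1 ≤ q ^ 2 := Nat.one_le_pow _ _ (by omega)
  have hs6 : 1 ≤ q ^ 6 := Nat.one_le_pow _ _ (by omega)
  have hs8 : 1 ≤ q ^ 8 := Nat.one_le_pow _ _ (by omega)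
  have hs12 : 1 ≤ q ^ 12 := Nat.one_le_pow _ _ (by omega)
  set Q : ℤ := (q : ℤ) with hQdef
  set M : ℤ := Q ^ 4 - Q ^ 2 + 1 with hMdef
  set R : ℤ := Q ^ 24 * (Q ^ 2 - 1) * (Q ^ 6 - 1) ^ 2 * (Q ^ 8 - 1) * (Q ^ 2 + 1) with hRdef
  have hQ3 : (3 : ℤ) ≤ Q := by rw [hQdef]; exact_mod_cast hq3
  have hM : ((q ^ 4 - q ^ 2 + 1 : ℕ) : ℤ) = M := by
    rw [Nat.cast_add, Nat.cast_sub h24, hMdef]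
    push_cast
    ring
  have hN : ((q ^ 24 * (q ^ 2 - 1) * (q ^ 6 - 1) * (q ^ 8 - 1) * (q ^ 12 - 1) : ℕ) : ℤ)
      = M * R := by
    push_cast [Nat.cast_sub hs2, Nat.cast_sub hs6, Nat.cast_sub hs8, Nat.cast_sub hs12]
    rw [hMdef, hRdef]
    ring
  have hdvd : M ^ 2 ∣ M * R := by
    have h' := Int.natCast_dvd_natCast.mpr h
    rwa [Nat.cast_pow, hM, hN] at h'
  have hQ9 : (9 : ℤ) ≤ Q ^ 2 := by nlinarith
  have hM73 : (73 : ℤ) ≤ M := by rw [hMdef]; nlinarith [sq_nonneg (Q ^ 2 - 9)]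
  have hMne : M ≠ 0 := by linarith
  have hdvdR : M ∣ R := by
    rw [sq] at hdvd
    exact (mul_dvd_mul_iff_left hMne).mp hdvd
  -- m is odd
  have e2q : q ^ 2 % 2 = 1 := Nat.odd_iff.mp (hqodd.pow)
  have e4q : q ^ 4 % 2 = 1 := Nat.odd_iff.mp (hqodd.pow)
  have hm2 : (q ^ 4 - q ^ 2 + 1) % 2 = 1 := by omega
  -- m ≡ 1 mod 3
  have e2 : q ^ 2 % 3 = (q % 3) ^ 2 % 3 := Nat.pow_mod q 2 3
  have e4 : q ^ 4 % 3 = (q % 3) ^ 4 % 3 := Nat.pow_mod q 4 3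
  have hm3 : (q ^ 4 - q ^ 2 + 1) % 3 = 1 := by
    have hr : q % 3 = 0 ∨ q % 3 = 1 ∨ q % 3 = 2 := by omega
    rcases hr with hr | hr | hr <;> rw [hr] at e2 e4 <;> norm_num at e2 e4 <;> omega
  obtain ⟨k2, hk2⟩ : ∃ k, q ^ 4 - q ^ 2 + 1 = 2 * k + 1 := ⟨(q ^ 4 - q ^ 2 + 1) / 2, by omega⟩
  obtain ⟨k3, hk3⟩ : ∃ k, q ^ 4 - q ^ 2 + 1 = 3 * k + 1 := ⟨(q ^ 4 - q ^ 2 + 1) / 3, by omega⟩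
  have hk2' : M = 2 * (k2 : ℤ) + 1 := by rw [← hM, hk2]; push_cast; ring
  have hk3' : M = 3 * (k3 : ℤ) + 1 := by rw [← hM, hk3]; push_cast; ring
  have c2 : IsCoprime M (2 : ℤ) := ⟨1, -(k2 : ℤ), by rw [hk2']; ring⟩
  have c3 : IsCoprime M (3 : ℤ) := ⟨1, -(k3 : ℤ), by rw [hk3']; ring⟩
  have cQ : IsCoprime M Q := ⟨1, Q - Q ^ 3, by rw [hMdef]; ring⟩
  have cQ2m1 : IsCoprime M (Q ^ 2 - 1) := ⟨1, -Q ^ 2, by rw [hMdef]; ring⟩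
  have cQ2p1 : IsCoprime M (Q ^ 2 + 1) := by
    obtain ⟨a, b, hab⟩ := c3
    exact ⟨a + b, -(b * (Q ^ 2 - 2)), by rw [hMdef] at hab ⊢; linear_combination hab⟩
  have cQ6m1 : IsCoprime M (Q ^ 6 - 1) := by
    obtain ⟨a, b, hab⟩ := c2
    exact ⟨a + b * (Q ^ 2 + 1), -b, by rw [hMdef] at hab ⊢; linear_combination hab⟩
  have cMm : IsCoprime M (Q ^ 2 * M - 1) := ⟨Q ^ 2, -1, by ring⟩
  have e8 : Q ^ 8 - 1 = (Q ^ 2 + 1) * (Q ^ 2 * M - 1) := by rw [hMdef]; ring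
  have cQ8m1 : IsCoprime M (Q ^ 8 - 1) := e8 ▸ cQ2p1.mul_right cMm
  have hcopR : IsCoprime M R := by
    rw [hRdef]
    exact ((((cQ.pow_right).mul_right cQ2m1).mul_right (cQ6m1.pow_right)).mul_right
      cQ8m1).mul_right cQ2p1
  have hM1 : M ∣ 1 := by
    obtain ⟨a, b, hab⟩ := hcopR
    obtain ⟨c, hc⟩ := hdvdR
    exact ⟨a + b * c, by rw [← hab, hc]; ring⟩
  have := Int.le_of_dvd one_pos hM1
  linarith
end
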